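/- arXiv:2601.18364 — 2 statements merged into one kernel-verified Lean document; each statement's English description precedes it below -/
import Mathlib

section
/- Let (‖e_i‖)_{i≥0} be a sequence of nonnegative reals with ‖e_{i+1}‖² = ‖e_i‖² − t_i for nonnegative t_i = a_i²/b_i² (with a_i ≤ ‖e_i‖ b_i). Then for any m ≥ 1, the geometric mean satisfies (∏_{i=m+1}^{2m} a_i/b_i)^{1/m} ≤ m^{-1/2} ‖e_{m+1}‖. -/
open Finset

/-- Block AM–GM bound for the greedy error recursion: if `‖e_{i+1}‖² = ‖e_i‖² − a_i²/b_i²`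
with `a_i ≤ E i * b_i`, then the geometric mean of `a_i/b_i` over the block
`i = m+1, …, 2m` is at most `m^{-1/2} ‖e_{m+1}‖`. (Division by zero is zero in Lean,
matching the convention `a_i/b_i = 0` when `b_i = 0`.) -/
theorem greedy_block_amgm (E a b : ℕ → ℝ)
    (hE : ∀ i, 0 ≤ E i) (ha : ∀ i, 0 ≤ a i) (hb : ∀ i, 0 ≤ b i)
    (hab : ∀ i, a i ≤ E i * b i)
    (hrec : ∀ i, E (i + 1) ^ 2 = E i ^ 2 - (a i / b i) ^ 2)
    (m : ℕ) (hm : 1 ≤ m) :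
    (∏ i ∈ Finset.Icc (m + 1) (2 * m), a i / b i) ^ ((1 : ℝ) / m) ≤
      (m : ℝ) ^ (-(1 / 2) : ℝ) * E (m + 1) := by
  have hx0 : ∀ i, 0 ≤ a i / b i := fun i => div_nonneg (ha i) (hb i)
  have hm0 : (0:ℝ) < (m:ℝ) := by exact_mod_cast hm
  -- telescoping
  have htel : ∀ n, m + 1 ≤ n →
      ∑ i ∈ Finset.Ico (m+1) n, (a i / b i)^2 = E (m+1)^2 - E n ^2 := by
    intro n hn
    induction n, hn using Nat.le_induction with
    | base => simp
    | succ n hn ih =>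
      rw [Finset.sum_Ico_succ_top hn, ih, hrec n]
      ring
  have hsum : ∑ i ∈ Finset.Icc (m+1) (2*m), (a i / b i)^2 ≤ E (m+1)^2 := by
    have h1 : Finset.Icc (m+1) (2*m) = Finset.Ico (m+1) (2*m+1) := by
      rw [Finset.Ico_add_one_right_eq_Icc]
    rw [h1, htel (2*m+1) (by omega)]
    nlinarith [hE (2*m+1)]
  have hcard : (Finset.Icc (m+1) (2*m)).card = m := by
    rw [Nat.card_Icc]; omega
  set P : ℝ := ∏ i ∈ Finset.Icc (m + 1) (2 * m), a i / b i with hP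
  have hP0 : 0 ≤ P := Finset.prod_nonneg (fun i _ => hx0 i)
  have hL0 : 0 ≤ P ^ ((1:ℝ)/m) := Real.rpow_nonneg hP0 _
  have hR0 : 0 ≤ (m : ℝ) ^ (-(1 / 2) : ℝ) * E (m + 1) :=
    mul_nonneg (Real.rpow_nonneg hm0.le _) (hE _)
  -- compare squares
  have hsq : (P ^ ((1:ℝ)/m)) ^ 2 ≤ ((m : ℝ) ^ (-(1 / 2) : ℝ) * E (m + 1)) ^ 2 := by
    have hLHS : (P ^ ((1:ℝ)/m)) ^ 2 = ∏ i ∈ Finset.Icc (m+1) (2*m), ((a i / b i)^2) ^ ((1:ℝ)/m) := by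
      rw [← Real.rpow_natCast (P ^ ((1:ℝ)/m)) 2, ← Real.rpow_mul hP0]
      rw [hP, ← Real.finset_prod_rpow _ _ (fun i _ => hx0 i)]
      refine Finset.prod_congr rfl fun i _ => ?_
      rw [← Real.rpow_natCast (a i / b i) 2, ← Real.rpow_mul (hx0 i)]
      push_cast
      ring_nf
    rw [hLHS]
    have hgm := Real.geom_mean_le_arith_mean_weighted (Finset.Icc (m+1) (2*m))
      (fun _ => (1:ℝ)/m) (fun i => (a i / b i)^2)
      (fun i _ => by positivity)
      (by rw [Finset.sum_const, hcard, nsmul_eq_mul]; field_simp)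
      (fun i _ => by positivity)
    calc ∏ i ∈ Finset.Icc (m+1) (2*m), ((a i / b i)^2) ^ ((1:ℝ)/m)
        ≤ ∑ i ∈ Finset.Icc (m+1) (2*m), (1/m) * (a i / b i)^2 := hgm
      _ = (1/m) * ∑ i ∈ Finset.Icc (m+1) (2*m), (a i / b i)^2 := by
          rw [Finset.mul_sum]
      _ ≤ (1/m) * E (m+1)^2 := by
          apply mul_le_mul_of_nonneg_left hsum (by positivity)
      _ = ((m : ℝ) ^ (-(1 / 2) : ℝ) * E (m + 1)) ^ 2 := by
          have h2 : ((m:ℝ) ^ (-(1/2):ℝ))^2 = (m:ℝ)⁻¹ := by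
            rw [← Real.rpow_natCast ((m:ℝ) ^ (-(1/2):ℝ)) 2, ← Real.rpow_mul hm0.le]
            norm_num [Real.rpow_neg_one]
          rw [mul_pow, h2]; ring
  exact (pow_le_pow_iff_left₀ hL0 hR0 two_ne_zero).mp hsq
end

section
/- Let H ∈ ℝ^{2n×2n} be symmetric, J the canonical Poisson matrix, and M(t) = exp(t J H) with lower-right n×n block D(t). Then the set R = {t ∈ ℝ : det D(t) = 0} has no finite accumulation point (it is discrete in ℝ). -/
/-!
Every entry of `exp (t • A)` is an entire function of `t`, so `det D(t)`, a polynomial in those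
entries, is real-analytic on all of `ℝ`. It equals `1` at `t = 0`, hence is not identically zero,
and by the isolated zeros principle its zero set has no accumulation point.
-/

open Matrix Filter

/-- The canonical Poisson matrix `J = [[0, Iₙ], [-Iₙ, 0]]`. -/
noncomputable def PoissonMatrix (n : ℕ) : Matrix (Fin n ⊕ Fin n) (Fin n ⊕ Fin n) ℝ :=
  Matrix.fromBlocks 0 1 (-1) 0

theorem AnalyticAt.matrix_det {𝕜 E A m : Type*} [NontriviallyNormedField 𝕜]
    [NormedAddCommGroup E] [NormedSpace 𝕜 E] [NormedCommRing A] [NormedAlgebra 𝕜 A]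
    [Fintype m] [DecidableEq m] {f : E → Matrix m m A} {x : E}
    (hf : ∀ i j, AnalyticAt 𝕜 (fun y ↦ f y i j) x) :
    AnalyticAt 𝕜 (fun y ↦ (f y).det) x := by
  simp only [det_apply, Units.smul_def, zsmul_eq_mul]
  exact Finset.analyticAt_fun_sum _ fun σ _ ↦
    analyticAt_const.mul (Finset.analyticAt_fun_prod _ fun i _ ↦ hf _ _)

attribute [local instance] Matrix.linftyOpNormedRing Matrix.linftyOpNormedAlgebra in
theorem analyticAt_exp_smul_apply {𝕂 m : Type*} [RCLike 𝕂] [Fintype m] [DecidableEq m]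
    (A : Matrix m m 𝕂) (i j : m) (t : 𝕂) :
    AnalyticAt 𝕂 (fun s : 𝕂 ↦ NormedSpace.exp (s • A) i j) t := by
  have hexp : AnalyticAt 𝕂 (fun s : 𝕂 ↦ NormedSpace.exp (s • A)) t :=
    (NormedSpace.exp_analytic (t • A)).comp (x := t) (analyticAt_id.smul analyticAt_const)
  exact ((entryLinearMap 𝕂 𝕂 i j).toContinuousLinearMap.analyticAt _).comp hexp

theorem AnalyticOnNhd.not_accPt_setOf_eq_zero {𝕜 E : Type*} [NontriviallyNormedField 𝕜]
    [PreconnectedSpace 𝕜] [NormedAddCommGroup E] [NormedSpace 𝕜 E] {f : 𝕜 → E}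
    (hf : AnalyticOnNhd 𝕜 f Set.univ) {z : 𝕜} (hz : f z ≠ 0) (t₀ : 𝕜) :
    ¬ AccPt t₀ (𝓟 {t | f t = 0}) := fun hacc ↦
  hz <| hf.eqOn_zero_of_preconnected_of_frequently_eq_zero isPreconnected_univ (Set.mem_univ t₀)
    (accPt_iff_frequently_nhdsNE.mp hacc) (Set.mem_univ z)

theorem Matrix.toBlocks₂₂_one {R m n : Type*} [Zero R] [One R] [DecidableEq m] [DecidableEq n] :
    toBlocks₂₂ (1 : Matrix (m ⊕ n) (m ⊕ n) R) = 1 := by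
  rw [← fromBlocks_one, toBlocks_fromBlocks₂₂]

theorem resonance_set_discrete_general {n : ℕ} (H : Matrix (Fin n ⊕ Fin n) (Fin n ⊕ Fin n) ℝ) :
    ∀ t₀ : ℝ, ¬ AccPt t₀ (𝓟 {t : ℝ |
      (Matrix.toBlocks₂₂ (NormedSpace.exp (t • (PoissonMatrix n * H)))).det = 0}) := by
  have hanalytic : AnalyticOnNhd ℝ
      (fun t : ℝ ↦ (toBlocks₂₂ (NormedSpace.exp (t • (PoissonMatrix n * H)))).det) Set.univ :=
    fun t _ ↦ AnalyticAt.matrix_det fun i j ↦ analyticAt_exp_smul_apply _ _ _ t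
  refine hanalytic.not_accPt_setOf_eq_zero (z := 0) ?_
  simp [NormedSpace.exp_zero, toBlocks₂₂_one]

/-- For symmetric `H` and `M(t) = exp(tJH)` with lower-right block `D(t)`, the
resonance set `{t : det D(t) = 0}` has no finite accumulation point. -/
theorem resonance_set_discrete {n : ℕ} (H : Matrix (Fin n ⊕ Fin n) (Fin n ⊕ Fin n) ℝ)
    (hH : Hᵀ = H) :
    ∀ t₀ : ℝ, ¬ AccPt t₀ (𝓟 {t : ℝ |
      (Matrix.toBlocks₂₂ (NormedSpace.exp (t • (PoissonMatrix n * H)))).det = 0}) :=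
  resonance_set_discrete_general H
end
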